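/- arXiv:2401.14160 — 3 statements merged into one kernel-verified Lean document; each statement's English description precedes it below -/
import Mathlib

section
/- For any joint probability mass function p on the product of finite sets U and V and any partition {U_s : s ∈ S} of U, the semantic conditional entropy is no more than the Shannon conditional entropy: H_s(Ũ|V) = −Σ_{v} Σ_{s∈S} p(U_s, v) log₂ (p(U_s, v)/p(v)) ≤ −Σ_{u,v} p(u,v) log₂ (p(u,v)/p(v)) = H(U|V), where p(U_s, v) = Σ_{u∈U_s} p(u,v), p(v) = Σ_u p(u,v), and terms with p(v) = 0 are omitted. -/
open Finset
open scoped Classical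

/-- Probability of a class of the partition induced by a class-index map `c`:
`P(U_s) = Σ_{u ∈ U_s} p u`. -/
noncomputable def Pclass {U S : Type*} [Fintype U] (p : U → ℝ) (c : U → S) (s : S) : ℝ :=
  ∑ u : U, if c u = s then p u else 0

/-- Semantic entropy `H_s(Ũ) = −Σ_s P(U_s) log₂ P(U_s)`. -/
noncomputable def semEntropy {U S : Type*} [Fintype U] [Fintype S]
    (p : U → ℝ) (c : U → S) : ℝ :=
  -∑ s : S, Pclass p c s * Real.logb 2 (Pclass p c s)

/-- Shannon entropy `H(U) = −Σ_u p(u) log₂ p(u)`. -/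
noncomputable def shEntropy {U : Type*} [Fintype U] (p : U → ℝ) : ℝ :=
  -∑ u : U, p u * Real.logb 2 (p u)

/-- Probability of a product class `P(U_s × V_t) = Σ_{u∈U_s} Σ_{v∈V_t} p(u,v)`. -/
noncomputable def PjointClass {U V S T : Type*} [Fintype U] [Fintype V]
    (p : U → V → ℝ) (cU : U → S) (cV : V → T) (s : S) (t : T) : ℝ :=
  ∑ u : U, ∑ v : V, if cU u = s ∧ cV v = t then p u v else 0

/-- Semantic joint entropy `H_s(Ũ,Ṽ) = −Σ_{s,t} P(U_s × V_t) log₂ P(U_s × V_t)`. -/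
noncomputable def semJointEntropy {U V S T : Type*} [Fintype U] [Fintype V] [Fintype S] [Fintype T]
    (p : U → V → ℝ) (cU : U → S) (cV : V → T) : ℝ :=
  -∑ s : S, ∑ t : T, PjointClass p cU cV s t * Real.logb 2 (PjointClass p cU cV s t)

/-- Shannon joint entropy `H(U,V) = −Σ_{u,v} p(u,v) log₂ p(u,v)`. -/
noncomputable def shJointEntropy {U V : Type*} [Fintype U] [Fintype V] (p : U → V → ℝ) : ℝ :=
  -∑ u : U, ∑ v : V, p u v * Real.logb 2 (p u v)

/-- Marginal `p(u) = Σ_v p(u,v)`. -/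
noncomputable def margU {U V : Type*} [Fintype V] (p : U → V → ℝ) (u : U) : ℝ :=
  ∑ v : V, p u v

/-- Marginal `p(v) = Σ_u p(u,v)`. -/
noncomputable def margV {U V : Type*} [Fintype U] (p : U → V → ℝ) (v : V) : ℝ :=
  ∑ u : U, p u v

/-- `p(U_s, v) = Σ_{u ∈ U_s} p(u,v)`. -/
noncomputable def PclassU {U V S : Type*} [Fintype U]
    (p : U → V → ℝ) (cU : U → S) (s : S) (v : V) : ℝ :=
  ∑ u : U, if cU u = s then p u v else 0

/-- `p(u, V_t) = Σ_{v ∈ V_t} p(u,v)`. -/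
noncomputable def PclassV {U V T : Type*} [Fintype V]
    (p : U → V → ℝ) (cV : V → T) (u : U) (t : T) : ℝ :=
  ∑ v : V, if cV v = t then p u v else 0

/-- Semantic conditional entropy
`H_s(Ũ|V) = −Σ_v Σ_s p(U_s, v) log₂ (p(U_s, v)/p(v))` (terms with `p(v) = 0` vanish). -/
noncomputable def semCondEntropyU {U V S : Type*} [Fintype U] [Fintype V] [Fintype S]
    (p : U → V → ℝ) (cU : U → S) : ℝ :=
  -∑ v : V, ∑ s : S, PclassU p cU s v * Real.logb 2 (PclassU p cU s v / margV p v)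

/-- Semantic conditional entropy
`H_s(Ṽ|U) = −Σ_u Σ_t p(u, V_t) log₂ (p(u, V_t)/p(u))` (terms with `p(u) = 0` vanish). -/
noncomputable def semCondEntropyV {U V T : Type*} [Fintype U] [Fintype V] [Fintype T]
    (p : U → V → ℝ) (cV : V → T) : ℝ :=
  -∑ u : U, ∑ t : T, PclassV p cV u t * Real.logb 2 (PclassV p cV u t / margU p u)

/-- Shannon conditional entropy `H(U|V) = −Σ_{u,v} p(u,v) log₂ (p(u,v)/p(v))`
(terms with `p(v) = 0` vanish). -/
noncomputable def shCondEntropyU {U V : Type*} [Fintype U] [Fintype V] (p : U → V → ℝ) : ℝ :=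
  -∑ u : U, ∑ v : V, p u v * Real.logb 2 (p u v / margV p v)

/-- Mutual information `I(U;V) = H(U) + H(V) − H(U,V)`. -/
noncomputable def mutualInfo {U V : Type*} [Fintype U] [Fintype V] (p : U → V → ℝ) : ℝ :=
  shEntropy (margU p) + shEntropy (margV p) - shJointEntropy p

/-- Down semantic mutual information `I_s(Ũ;Ṽ) = H_s(Ũ) + H_s(Ṽ) − H(U,V)`. -/
noncomputable def downSMI {U V S T : Type*} [Fintype U] [Fintype V] [Fintype S] [Fintype T]
    (p : U → V → ℝ) (cU : U → S) (cV : V → T) : ℝ :=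
  semEntropy (margU p) cU + semEntropy (margV p) cV - shJointEntropy p

/-- Up semantic mutual information `I^s(Ũ;Ṽ) = H(U) + H(V) − H_s(Ũ,Ṽ)`. -/
noncomputable def upSMI {U V S T : Type*} [Fintype U] [Fintype V] [Fintype S] [Fintype T]
    (p : U → V → ℝ) (cU : U → S) (cV : V → T) : ℝ :=
  shEntropy (margU p) + shEntropy (margV p) - semJointEntropy p cU cV

/-! Fix `v` and write `P = p(v)`. Every `u` lies in its own class, so `p(u,v) ≤ p(U_{c u}, v)` and
hence `p(u,v) log₂ (p(u,v)/P) ≤ p(u,v) log₂ (p(U_{c u}, v)/P)`. Summing over `u` and regrouping the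
right-hand side by classes gives `Σ_s p(U_s, v) log₂ (p(U_s, v)/P)`, so the inequality holds for
each `v` separately. -/

open Finset

theorem sum_fiberwise_mul_eq_sum_mul_comp {U S R : Type*} [Fintype U] [Fintype S] [DecidableEq S]
    [CommSemiring R] (f : U → R) (c : U → S) (g : S → R) :
    ∑ s, (∑ u, if c u = s then f u else 0) * g s = ∑ u, f u * g (c u) := by
  simp_rw [sum_mul, ite_mul, zero_mul]
  rw [sum_comm]
  simp

theorem mul_logb_div_le_mul_logb_div {b x y : ℝ} (hb : 1 < b) (hx : 0 ≤ x) (hxy : x ≤ y)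
    (z : ℝ) : x * Real.logb b (x / z) ≤ x * Real.logb b (y / z) := by
  rcases hx.eq_or_lt with rfl | hx
  · simp
  rcases eq_or_ne z 0 with rfl | hz
  · simp
  refine mul_le_mul_of_nonneg_left ?_ hx.le
  -- `logb` only sees `|·|`, so the sign of `z` is irrelevant
  rw [← Real.logb_abs b (x / z), ← Real.logb_abs b (y / z), abs_div, abs_div]
  exact Real.logb_le_logb_of_le hb (div_pos (abs_pos.2 hx.ne') (abs_pos.2 hz))
    (div_le_div_of_nonneg_right (abs_le_abs_of_nonneg hx.le hxy) (abs_nonneg z))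

theorem le_PclassU_self {U V S : Type*} [Fintype U] (p : U → V → ℝ) (hp0 : ∀ u v, 0 ≤ p u v)
    (cU : U → S) (u : U) (v : V) : p u v ≤ PclassU p cU (cU u) v :=
  calc p u v = if cU u = cU u then p u v else 0 := (if_pos rfl).symm
    _ ≤ PclassU p cU (cU u) v :=
      single_le_sum (f := fun u' => if cU u' = cU u then p u' v else 0)
        (fun u' _ => by split_ifs <;> simp [hp0]) (mem_univ u)

theorem semantic_conditional_entropy_le_shannon_conditional_entropy_general
    {U V S : Type*} [Fintype U] [Fintype V] [Fintype S]
    (p : U → V → ℝ) (hp0 : ∀ u v, 0 ≤ p u v)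
    (cU : U → S) :
    semCondEntropyU p cU ≤ shCondEntropyU p := by
  unfold semCondEntropyU shCondEntropyU
  rw [sum_comm (s := univ (α := U))]
  refine neg_le_neg (sum_le_sum fun v _ => ?_)
  calc ∑ u, p u v * Real.logb 2 (p u v / margV p v)
      ≤ ∑ u, p u v * Real.logb 2 (PclassU p cU (cU u) v / margV p v) :=
        sum_le_sum fun u _ =>
          mul_logb_div_le_mul_logb_div one_lt_two (hp0 u v) (le_PclassU_self p hp0 cU u v) _
    _ = ∑ s, PclassU p cU s v * Real.logb 2 (PclassU p cU s v / margV p v) :=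
        (sum_fiberwise_mul_eq_sum_mul_comp (fun u => p u v) cU
          fun s => Real.logb 2 (PclassU p cU s v / margV p v)).symm

/-- For any joint pmf `p` on `U × V` and any partition of `U`
(encoded by a surjective class-index map `cU`), the semantic conditional entropy is at most
the Shannon conditional entropy: `H_s(Ũ|V) ≤ H(U|V)`. -/
theorem semantic_conditional_entropy_le_shannon_conditional_entropy
    {U V S : Type*} [Fintype U] [Fintype V] [Fintype S]
    (p : U → V → ℝ) (hp0 : ∀ u v, 0 ≤ p u v) (hp1 : ∑ u : U, ∑ v : V, p u v = 1)
    (cU : U → S) (hcU : Function.Surjective cU) :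
    semCondEntropyU p cU ≤ shCondEntropyU p :=
  semantic_conditional_entropy_le_shannon_conditional_entropy_general p hp0 cU
end

section
/- (Chain rule of semantic entropy) For any joint probability mass function p on the product of finite sets U and V and any partitions {U_s : s ∈ S} of U and {V_t : t ∈ T} of V, the following chain of inequalities holds: H_s(Ũ) + H_s(Ṽ|U) ≤ H_s(Ũ,Ṽ) ≤ H(U) + H_s(Ṽ|U) ≤ H(U,V). -/
open Finset
open scoped Classical

/-!
Merging outcomes can only lower entropy, since `x ↦ x log x` is superadditive on `[0, ∞)`, and
merging values of the conditioning variable can only raise a conditional entropy, by the log-sum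
inequality. Put `q(u, t) = p(u, V_t)`, the law of `(U, Ṽ)`. The chain rule gives
`H(U) + H_s(Ṽ|U) = H(U, Ṽ)` and `H_s(Ũ, Ṽ) = H_s(Ũ) + H_s(Ṽ|Ũ)`. The first inequality is then
`H_s(Ṽ|U) ≤ H_s(Ṽ|Ũ)`, and the other two say that `(Ũ, Ṽ)` is a merging of `(U, Ṽ)`, which is
a merging of `(U, V)`.
-/

section
open Real

theorem Real.sub_le_mul_log_div {x y : ℝ} (hx : 0 ≤ x) (hy : 0 < y) :
    x - y ≤ x * log (x / y) := by
  calc x - y = y * (x / y - 1) := by field_simp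
    _ ≤ y * (x / y * log (x / y)) :=
        mul_le_mul_of_nonneg_left (self_sub_one_le_mul_log (div_nonneg hx hy.le)) hy.le
    _ = x * log (x / y) := by field_simp

namespace Finset

variable {ι : Type*} (s : Finset ι) {a b : ι → ℝ}

theorem sum_mul_logb_le_sum_mul_logb_sum (ha : ∀ i ∈ s, 0 ≤ a i) :
    ∑ i ∈ s, a i * logb 2 (a i) ≤ (∑ i ∈ s, a i) * logb 2 (∑ i ∈ s, a i) := by
  rw [sum_mul]
  refine sum_le_sum fun i hi => ?_
  rcases (ha i hi).eq_or_lt with h | h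
  · simp [← h]
  · exact mul_le_mul_of_nonneg_left
      (logb_le_logb_of_le one_lt_two h (single_le_sum ha hi)) h.le

theorem sum_mul_logb_eq_sum_mul_logb_sum_add (ha : ∀ i ∈ s, 0 ≤ a i) :
    ∑ i ∈ s, a i * logb 2 (a i) =
      (∑ i ∈ s, a i) * logb 2 (∑ i ∈ s, a i) +
        ∑ i ∈ s, a i * logb 2 (a i / ∑ j ∈ s, a j) := by
  rcases (sum_nonneg ha).eq_or_lt with hA | hA
  · have ha0 := (sum_eq_zero_iff_of_nonneg ha).1 hA.symm
    rw [← hA, zero_mul, zero_add]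
    exact sum_congr rfl fun i hi => by simp [ha0 i hi]
  · rw [sum_mul, ← sum_add_distrib]
    refine sum_congr rfl fun i hi => ?_
    rcases (ha i hi).eq_or_lt with h | h
    · simp [← h]
    · rw [logb_div h.ne' hA.ne']
      ring

/-- The log-sum inequality. -/
theorem sum_mul_log_div_sum_le (ha : ∀ i ∈ s, 0 ≤ a i) (hb : ∀ i ∈ s, 0 ≤ b i)
    (hab : ∀ i ∈ s, b i = 0 → a i = 0) :
    (∑ i ∈ s, a i) * log ((∑ i ∈ s, a i) / ∑ i ∈ s, b i) ≤
      ∑ i ∈ s, a i * log (a i / b i) := by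
  set A := ∑ i ∈ s, a i
  set B := ∑ i ∈ s, b i
  rcases (sum_nonneg ha : 0 ≤ A).eq_or_lt with hA | hA
  · have ha0 := (sum_eq_zero_iff_of_nonneg ha).1 hA.symm
    rw [show A = 0 from hA.symm, zero_mul]
    exact (sum_eq_zero fun i hi => by simp [ha0 i hi]).ge
  have hB : 0 < B := (sum_nonneg hb : 0 ≤ B).lt_of_ne fun hB => hA.ne' <|
    sum_eq_zero fun i hi => hab i hi ((sum_eq_zero_iff_of_nonneg hb).1 hB.symm i hi)
  -- compare each `a i` with the share `b i * (A / B)` it would have if `a` were proportional to `b`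
  have key : ∀ i ∈ s, a i - b i * (A / B) ≤ a i * log (a i / b i) - a i * log (A / B) := by
    intro i hi
    rcases (ha i hi).eq_or_lt with h | h
    · rw [← h]
      simpa using mul_nonneg (hb i hi) (div_nonneg hA.le hB.le)
    have hbi : 0 < b i := (hb i hi).lt_of_ne fun e => h.ne' (hab i hi e.symm)
    calc a i - b i * (A / B) ≤ a i * log (a i / (b i * (A / B))) :=
          sub_le_mul_log_div h.le (by positivity)
      _ = a i * log (a i / b i) - a i * log (A / B) := by
          rw [← mul_sub, ← log_div (by positivity) (by positivity)]
          congr 2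
          field_simp
  have hsum := sum_le_sum key
  rw [sum_sub_distrib, sum_sub_distrib, ← sum_mul, ← sum_mul, mul_div_cancel₀ A hB.ne'] at hsum
  linarith

theorem sum_mul_logb_div_sum_le (ha : ∀ i ∈ s, 0 ≤ a i) (hb : ∀ i ∈ s, 0 ≤ b i)
    (hab : ∀ i ∈ s, b i = 0 → a i = 0) :
    (∑ i ∈ s, a i) * logb 2 ((∑ i ∈ s, a i) / ∑ i ∈ s, b i) ≤
      ∑ i ∈ s, a i * logb 2 (a i / b i) := by
  simp only [logb, ← mul_div_assoc, ← sum_div]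
  exact div_le_div_of_nonneg_right (sum_mul_log_div_sum_le s ha hb hab) (log_nonneg one_le_two)

end Finset

variable {U V S T : Type*}

theorem Pclass_eq_sum_filter [Fintype U] (f : U → ℝ) (c : U → S) (s : S) :
    Pclass f c s = ∑ u with c u = s, f u :=
  (sum_filter _ _).symm

theorem Pclass_nonneg [Fintype U] {f : U → ℝ} (hf : ∀ u, 0 ≤ f u) (c : U → S) (s : S) :
    0 ≤ Pclass f c s :=
  sum_nonneg fun u _ => by split_ifs <;> simp [hf u]

theorem sum_Pclass [Fintype U] [Fintype S] (f : U → ℝ) (c : U → S) :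
    ∑ s, Pclass f c s = ∑ u, f u := by
  simp only [Pclass_eq_sum_filter]
  exact sum_fiberwise univ c f

theorem Pclass_sum [Fintype U] [Fintype V] (r : U → V → ℝ) (c : U → S) (s : S) :
    Pclass (fun u => ∑ v, r u v) c s = ∑ v, Pclass (fun u => r u v) c s := by
  simp only [Pclass_eq_sum_filter]
  exact sum_comm

theorem semEntropy_le_shEntropy [Fintype U] [Fintype S] {f : U → ℝ} (hf : ∀ u, 0 ≤ f u)
    (c : U → S) : semEntropy f c ≤ shEntropy f := by
  rw [semEntropy, shEntropy, neg_le_neg_iff, ← sum_fiberwise univ c]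
  refine sum_le_sum fun s _ => ?_
  rw [Pclass_eq_sum_filter]
  exact sum_mul_logb_le_sum_mul_logb_sum _ fun u _ => hf u

theorem sum_Pclass_mul_logb_div_le [Fintype U] [Fintype S] {a b : U → ℝ}
    (ha : ∀ u, 0 ≤ a u) (hb : ∀ u, 0 ≤ b u) (hab : ∀ u, b u = 0 → a u = 0) (c : U → S) :
    ∑ s, Pclass a c s * logb 2 (Pclass a c s / Pclass b c s) ≤
      ∑ u, a u * logb 2 (a u / b u) := by
  rw [← sum_fiberwise univ c]
  refine sum_le_sum fun s _ => ?_
  rw [Pclass_eq_sum_filter, Pclass_eq_sum_filter]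
  exact sum_mul_logb_div_sum_le _ (fun u _ => ha u) (fun u _ => hb u) fun u _ => hab u

theorem shJointEntropy_eq_sum_shEntropy [Fintype U] [Fintype V] (r : U → V → ℝ) :
    shJointEntropy r = ∑ u, shEntropy (r u) := by
  simp only [shJointEntropy, shEntropy, sum_neg_distrib]

theorem shJointEntropy_comm [Fintype U] [Fintype V] (r : U → V → ℝ) :
    shJointEntropy (fun v u => r u v) = shJointEntropy r := by
  rw [shJointEntropy, shJointEntropy, sum_comm]

theorem shJointEntropy_Pclass_right_le [Fintype U] [Fintype V] [Fintype T] {r : U → V → ℝ}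
    (hr : ∀ u v, 0 ≤ r u v) (c : V → T) :
    shJointEntropy (fun u t => Pclass (r u) c t) ≤ shJointEntropy r := by
  simp only [shJointEntropy_eq_sum_shEntropy]
  exact sum_le_sum fun u _ => semEntropy_le_shEntropy (hr u) c

theorem shJointEntropy_Pclass_left_le [Fintype U] [Fintype V] [Fintype S] {r : U → V → ℝ}
    (hr : ∀ u v, 0 ≤ r u v) (c : U → S) :
    shJointEntropy (fun s v => Pclass (fun u => r u v) c s) ≤ shJointEntropy r :=
  calc shJointEntropy (fun s v => Pclass (fun u => r u v) c s)
      = shJointEntropy (fun v s => Pclass (fun u => r u v) c s) := (shJointEntropy_comm _).symm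
    _ ≤ shJointEntropy (fun v u => r u v) := shJointEntropy_Pclass_right_le (fun v u => hr u v) c
    _ = shJointEntropy r := shJointEntropy_comm r

/-- Shannon conditional entropy `H(V|U)`. -/
noncomputable def shCondEntropyV [Fintype U] [Fintype V] (r : U → V → ℝ) : ℝ :=
  -∑ u, ∑ v, r u v * logb 2 (r u v / margU r u)

theorem eq_zero_of_margU_eq_zero [Fintype V] {r : U → V → ℝ} (hr : ∀ u v, 0 ≤ r u v) {u : U}
    (hu : margU r u = 0) (v : V) : r u v = 0 :=
  (sum_eq_zero_iff_of_nonneg fun v _ => hr u v).1 hu v (mem_univ v)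

theorem margU_Pclass_left [Fintype U] [Fintype V] (r : U → V → ℝ) (c : U → S) :
    margU (fun s v => Pclass (fun u => r u v) c s) = Pclass (margU r) c :=
  funext fun s => (Pclass_sum r c s).symm

theorem shJointEntropy_eq_shEntropy_margU_add [Fintype U] [Fintype V] {r : U → V → ℝ}
    (hr : ∀ u v, 0 ≤ r u v) : shJointEntropy r = shEntropy (margU r) + shCondEntropyV r := by
  simp only [shJointEntropy, shEntropy, shCondEntropyV, margU]
  rw [← neg_add, ← sum_add_distrib]
  exact congrArg _ <| sum_congr rfl fun u _ =>
    sum_mul_logb_eq_sum_mul_logb_sum_add _ fun v _ => hr u v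

theorem shCondEntropyV_le_Pclass_left [Fintype U] [Fintype V] [Fintype S] {r : U → V → ℝ}
    (hr : ∀ u v, 0 ≤ r u v) (c : U → S) :
    shCondEntropyV r ≤ shCondEntropyV (fun s v => Pclass (fun u => r u v) c s) := by
  rw [shCondEntropyV, shCondEntropyV, margU_Pclass_left, neg_le_neg_iff,
    sum_comm (s := (univ : Finset S)), sum_comm (s := (univ : Finset U))]
  exact sum_le_sum fun v _ => sum_Pclass_mul_logb_div_le (b := margU r) (fun u => hr u v)
    (fun u => sum_nonneg fun v _ => hr u v) (fun u hu => eq_zero_of_margU_eq_zero hr hu v) c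

theorem margU_PclassV [Fintype V] [Fintype T] (p : U → V → ℝ) (c : V → T) :
    margU (PclassV p c) = margU p :=
  funext fun u => sum_Pclass (p u) c

theorem semCondEntropyV_eq_shCondEntropyV [Fintype U] [Fintype V] [Fintype T]
    (p : U → V → ℝ) (c : V → T) : semCondEntropyV p c = shCondEntropyV (PclassV p c) := by
  rw [shCondEntropyV, margU_PclassV]
  rfl

theorem PjointClass_eq_Pclass_PclassV [Fintype U] [Fintype V] (p : U → V → ℝ) (cU : U → S)
    (cV : V → T) (s : S) (t : T) :
    PjointClass p cU cV s t = Pclass (fun u => PclassV p cV u t) cU s := by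
  refine sum_congr rfl fun u _ => ?_
  by_cases h : cU u = s <;> simp [h, PclassV]

theorem semJointEntropy_eq_shJointEntropy [Fintype U] [Fintype V] [Fintype S] [Fintype T]
    (p : U → V → ℝ) (cU : U → S) (cV : V → T) :
    semJointEntropy p cU cV =
      shJointEntropy (fun s t => Pclass (fun u => PclassV p cV u t) cU s) := by
  simp only [semJointEntropy, shJointEntropy, PjointClass_eq_Pclass_PclassV]

end

theorem semantic_entropy_chain_rule_general
    {U V S T : Type*} [Fintype U] [Fintype V] [Fintype S] [Fintype T]
    (p : U → V → ℝ) (hp0 : ∀ u v, 0 ≤ p u v)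
    (cU : U → S)
    (cV : V → T) :
    semEntropy (margU p) cU + semCondEntropyV p cV ≤ semJointEntropy p cU cV ∧
    semJointEntropy p cU cV ≤ shEntropy (margU p) + semCondEntropyV p cV ∧
    shEntropy (margU p) + semCondEntropyV p cV ≤ shJointEntropy p := by
  have hq : ∀ u t, 0 ≤ PclassV p cV u t := fun u => Pclass_nonneg (hp0 u) cV
  have hqU : ∀ s t, 0 ≤ Pclass (fun u => PclassV p cV u t) cU s := fun s t =>
    Pclass_nonneg (fun u => hq u t) cU s
  have hfine : shEntropy (margU p) + semCondEntropyV p cV = shJointEntropy (PclassV p cV) := by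
    rw [shJointEntropy_eq_shEntropy_margU_add hq, margU_PclassV,
      semCondEntropyV_eq_shCondEntropyV]
  have hcoarse : semJointEntropy p cU cV = semEntropy (margU p) cU +
      shCondEntropyV (fun s t => Pclass (fun u => PclassV p cV u t) cU s) := by
    rw [semJointEntropy_eq_shJointEntropy, shJointEntropy_eq_shEntropy_margU_add hqU,
      margU_Pclass_left, margU_PclassV]
    rfl
  refine ⟨?_, ?_, ?_⟩
  · rw [hcoarse, semCondEntropyV_eq_shCondEntropyV]
    exact add_le_add_right (shCondEntropyV_le_Pclass_left hq cU) _
  · rw [semJointEntropy_eq_shJointEntropy, hfine]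
    exact shJointEntropy_Pclass_left_le hq cU
  · rw [hfine]
    exact shJointEntropy_Pclass_right_le hp0 cV

/-- Chain rule of semantic entropy: For any joint pmf `p` on `U × V` and any
partitions of `U` and `V` (encoded by surjective class-index maps `cU`, `cV`),
`H_s(Ũ) + H_s(Ṽ|U) ≤ H_s(Ũ,Ṽ) ≤ H(U) + H_s(Ṽ|U) ≤ H(U,V)`. -/
theorem semantic_entropy_chain_rule
    {U V S T : Type*} [Fintype U] [Fintype V] [Fintype S] [Fintype T]
    (p : U → V → ℝ) (hp0 : ∀ u v, 0 ≤ p u v) (hp1 : ∑ u : U, ∑ v : V, p u v = 1)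
    (cU : U → S) (hcU : Function.Surjective cU)
    (cV : V → T) (hcV : Function.Surjective cV) :
    semEntropy (margU p) cU + semCondEntropyV p cV ≤ semJointEntropy p cU cV ∧
    semJointEntropy p cU cV ≤ shEntropy (margU p) + semCondEntropyV p cV ∧
    shEntropy (margU p) + semCondEntropyV p cV ≤ shJointEntropy p :=
  semantic_entropy_chain_rule_general p hp0 cU cV
end

section
/- For any discrete memoryless channel given by a stochastic matrix W(y|x) from a finite input set X to a finite output set Y, and any partitions {X_s : s ∈ S} of X and {Y_t : t ∈ T} of Y, the semantic channel capacity is at least the Shannon channel capacity: C = sup over input probability mass functions p of I(X;Y) ≤ sup over input probability mass functions p of I^s(X̃;Ỹ) = C_s, where for each p the joint distribution is p(x)W(y|x). -/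
open Finset
open scoped Classical

/-! Merging the pairs `(x, y)` into the blocks `X_s × Y_t` can only raise the probability assigned
to each pair, so `H_s(X̃,Ỹ) ≤ H(X,Y)` and hence `I(X;Y) ≤ I^s(X̃;Ỹ)` for every input distribution.
The inequality passes to the suprema because `I^s` is continuous on the compact simplex of input
distributions, so the semantic values are bounded above. -/

theorem le_PjointClass {U V S T : Type*} [Fintype U] [Fintype V] {q : U → V → ℝ}
    (hq : ∀ u v, 0 ≤ q u v) (cU : U → S) (cV : V → T) (u : U) (v : V) :
    q u v ≤ PjointClass q cU cV (cU u) (cV v) := by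
  have h := Finset.single_le_sum (f := fun w : U × V =>
    if cU w.1 = cU u ∧ cV w.2 = cV v then q w.1 w.2 else 0)
    (fun w _ => by split_ifs <;> simp [hq]) (Finset.mem_univ (u, v))
  simpa [PjointClass, Fintype.sum_prod_type] using h

theorem sum_PjointClass_mul {U V S T : Type*} [Fintype U] [Fintype V] [Fintype S] [Fintype T]
    (q : U → V → ℝ) (cU : U → S) (cV : V → T) (f : S → T → ℝ) :
    ∑ s, ∑ t, PjointClass q cU cV s t * f s t = ∑ u, ∑ v, q u v * f (cU u) (cV v) := by
  simp only [PjointClass, Finset.sum_mul, ite_mul, zero_mul]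
  rw [Finset.sum_comm]
  simp [ite_and, Finset.sum_comm (γ := T), Finset.sum_comm (γ := S)]

theorem mul_logb_le_mul_logb {b x y : ℝ} (hb : 1 < b) (hx : 0 ≤ x) (hxy : x ≤ y) :
    x * Real.logb b x ≤ x * Real.logb b y := by
  rcases hx.eq_or_lt with rfl | hx
  · simp
  · gcongr

theorem semJointEntropy_le_shJointEntropy {U V S T : Type*}
    [Fintype U] [Fintype V] [Fintype S] [Fintype T]
    {q : U → V → ℝ} (hq : ∀ u v, 0 ≤ q u v) (cU : U → S) (cV : V → T) :
    semJointEntropy q cU cV ≤ shJointEntropy q := by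
  rw [semJointEntropy, shJointEntropy, neg_le_neg_iff,
    sum_PjointClass_mul q cU cV fun s t => Real.logb 2 (PjointClass q cU cV s t)]
  refine Finset.sum_le_sum fun u _ => Finset.sum_le_sum fun v _ => ?_
  exact mul_logb_le_mul_logb one_lt_two (hq u v) (le_PjointClass hq cU cV u v)

theorem mutualInfo_le_upSMI {U V S T : Type*} [Fintype U] [Fintype V] [Fintype S] [Fintype T]
    {q : U → V → ℝ} (hq : ∀ u v, 0 ≤ q u v) (cU : U → S) (cV : V → T) :
    mutualInfo q ≤ upSMI q cU cV := by
  have := semJointEntropy_le_shJointEntropy hq cU cV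
  rw [mutualInfo, upSMI]
  linarith

@[fun_prop]
theorem Continuous.mul_logb {α : Type*} [TopologicalSpace α] {f : α → ℝ} (hf : Continuous f)
    (b : ℝ) : Continuous fun a => f a * Real.logb b (f a) := by
  simp only [Real.logb, ← mul_div_assoc]
  fun_prop

theorem continuous_PjointClass {U V S T : Type*} [Fintype U] [Fintype V]
    (cU : U → S) (cV : V → T) (s : S) (t : T) :
    Continuous fun q : U → V → ℝ => PjointClass q cU cV s t :=
  continuous_finsetSum _ fun u _ => continuous_finsetSum _ fun v _ =>
    ((continuous_apply v).comp (continuous_apply u)).if_const _ continuous_const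

theorem continuous_upSMI {U V S T : Type*} [Fintype U] [Fintype V] [Fintype S] [Fintype T]
    (cU : U → S) (cV : V → T) : Continuous fun q : U → V → ℝ => upSMI q cU cV := by
  have := continuous_PjointClass cU cV
  unfold upSMI shEntropy semJointEntropy margU margV
  fun_prop

theorem csSup_image_le_csSup_image {ι α : Type*} [ConditionallyCompleteLattice α] {s : Set ι}
    {f g : ι → α} (hfg : ∀ i ∈ s, f i ≤ g i) (hg : BddAbove (g '' s)) :
    sSup (f '' s) ≤ sSup (g '' s) := by
  simp only [Set.image_eq_range] at hg ⊢
  exact ciSup_mono hg fun i => hfg i i.2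

theorem setOf_exists_mem_stdSimplex_eq_image {X α : Type*} [Fintype X] (F : (X → ℝ) → α) :
    {r | ∃ p : X → ℝ, (∀ x, 0 ≤ p x) ∧ (∑ x, p x = 1) ∧ r = F p} =
      F '' stdSimplex ℝ X := by
  ext r
  simp [stdSimplex, and_assoc, eq_comm]

theorem shannon_capacity_le_semantic_capacity_general
    {X Y S T : Type*} [Fintype X] [Fintype Y] [Fintype S] [Fintype T]
    (W : X → Y → ℝ) (hW0 : ∀ x y, 0 ≤ W x y)
    (cX : X → S) (cY : Y → T) :
    sSup {r : ℝ | ∃ p : X → ℝ, (∀ x, 0 ≤ p x) ∧ (∑ x : X, p x = 1) ∧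
        r = mutualInfo (fun x y => p x * W x y)} ≤
    sSup {r : ℝ | ∃ p : X → ℝ, (∀ x, 0 ≤ p x) ∧ (∑ x : X, p x = 1) ∧
        r = upSMI (fun x y => p x * W x y) cX cY} := by
  rw [setOf_exists_mem_stdSimplex_eq_image, setOf_exists_mem_stdSimplex_eq_image]
  have hjoint : Continuous fun p : X → ℝ => fun x y => p x * W x y := by fun_prop
  refine csSup_image_le_csSup_image
    (fun p hp => mutualInfo_le_upSMI (fun x y => mul_nonneg (hp.1 x) (hW0 x y)) cX cY) ?_
  exact (isCompact_stdSimplex ℝ X).bddAbove_image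
    ((continuous_upSMI cX cY).comp hjoint).continuousOn

/-- For any discrete memoryless channel `W(y|x)` from a finite input set `X`
to a finite output set `Y`, and any partitions of `X` and `Y` (encoded by surjective
class-index maps `cX`, `cY`), the semantic channel capacity is at least the Shannon channel
capacity: `C = sup_p I(X;Y) ≤ sup_p I^s(X̃;Ỹ) = C_s`, where for each input pmf `p` the
joint distribution is `q(x,y) = p(x) W(y|x)`. -/
theorem shannon_capacity_le_semantic_capacity
    {X Y S T : Type*} [Fintype X] [Fintype Y] [Fintype S] [Fintype T]
    (W : X → Y → ℝ) (hW0 : ∀ x y, 0 ≤ W x y) (hW1 : ∀ x, ∑ y : Y, W x y = 1)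
    (cX : X → S) (hcX : Function.Surjective cX)
    (cY : Y → T) (hcY : Function.Surjective cY) :
    sSup {r : ℝ | ∃ p : X → ℝ, (∀ x, 0 ≤ p x) ∧ (∑ x : X, p x = 1) ∧
        r = mutualInfo (fun x y => p x * W x y)} ≤
    sSup {r : ℝ | ∃ p : X → ℝ, (∀ x, 0 ≤ p x) ∧ (∑ x : X, p x = 1) ∧
        r = upSMI (fun x y => p x * W x y) cX cY} :=
  shannon_capacity_le_semantic_capacity_general W hW0 cX cY
end
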